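/- Let p = 2^m − δ be prime, μ < m with δ < 2^μ − 1, and 2^k ≤ p. Let X ≠ X′ be binary strings of lengths L ≥ L′ ≥ 0, α ∈ Z_{2^μ}, and ℓ = ⌈L/n⌉. If τ is uniform over k-bit strings, then Pr[polyHash_τ(X) − polyHash_τ(X′) = α] ≤ ℓ · 2^{m−k−μ+1}. -/

import Mathlib

/-!
The hash difference is the value at `τ` of `Q = τ·Poly(τ; pad1(X)) − τ·Poly(τ; pad1(X'))`,
a polynomial of degree at most `ℓ` with zero constant term. It is nonzero: the padded blocks are
distinct positive integers below `p`, so the coefficients of `τ·Poly(τ; pad1(X))` recover the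
number of blocks and every block, hence `X`. If the two hashes differ by `α` in `ℤ/2^μ`, their
representatives in `[0, p)` differ by an integer `d ∈ (−p, p)` with `d ≡ α (mod 2^μ)`; as
`2p ≤ 2^(m+1)` there are at most `2^(m+1−μ)` such `d`, and for each of them `Q(τ) = d` has at
most `ℓ` roots among the `2^k ≤ p` distinct residues `τ`.
-/

/-- The (big-endian) numerical value of a bit string. -/
def blockVal (b : List Bool) : ℕ :=
  b.foldl (fun acc bit => 2 * acc + bit.toNat) 0

/-- The `i`-th (0-based) block of `X` after `pad1`: the block `X_{i+1}` of length `len`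
(`len = n` for full blocks, `len = s` for the last), padded to `0^{m−len−2}||1||X_{i+1}`,
whose numerical value is `2^len + val(X_{i+1})`, viewed in `F_p`. -/
def pad1Block (p n : ℕ) (X : List Bool) (i : ℕ) : ZMod p :=
  ((2 ^ ((X.drop (n * i)).take n).length + blockVal ((X.drop (n * i)).take n) : ℕ) : ZMod p)

/-- `polyHash_τ(X) = ((τ·Poly(τ; M_1,…,M_ℓ) mod p) mod 2^μ)` where
`Poly(τ; M_1,…,M_ℓ) = Σ_{i=1}^{ℓ} M_i τ^{ℓ−i}` and `(M_1,…,M_ℓ) = pad1(format(X))`. -/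
def polyHash (p μ n : ℕ) (τ : ZMod p) (X : List Bool) : ZMod (2 ^ μ) :=
  (((τ * ∑ i ∈ Finset.range ((X.length + n - 1) / n),
      pad1Block p n X i * τ ^ ((X.length + n - 1) / n - 1 - i)).val : ℕ) : ZMod (2 ^ μ))

open Finset Polynomial

theorem foldl_eq_mul_add_blockVal (l : List Bool) (acc : ℕ) :
    l.foldl (fun acc bit => 2 * acc + bit.toNat) acc = acc * 2 ^ l.length + blockVal l := by
  induction l generalizing acc with
  | nil => simp [blockVal]
  | cons a l ih =>
    rw [blockVal, List.foldl_cons, List.foldl_cons, ih, ih, List.length_cons]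
    ring

theorem blockVal_cons (a : Bool) (l : List Bool) :
    blockVal (a :: l) = a.toNat * 2 ^ l.length + blockVal l := by
  rw [blockVal, List.foldl_cons, foldl_eq_mul_add_blockVal]
  simp

theorem blockVal_lt (l : List Bool) : blockVal l < 2 ^ l.length := by
  induction l with
  | nil => simp [blockVal]
  | cons a l ih =>
    rw [blockVal_cons, List.length_cons, pow_succ]
    have := Bool.toNat_le a
    nlinarith

theorem eq_of_blockVal_eq_of_length_eq {l l' : List Bool} (hlen : l.length = l'.length)
    (h : blockVal l = blockVal l') : l = l' := by
  induction l generalizing l' with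
  | nil => exact (List.length_eq_zero_iff.mp hlen.symm).symm
  | cons a l ih =>
    obtain _ | ⟨b, l'⟩ := l'
    · simp at hlen
    · simp only [List.length_cons, Nat.succ_inj] at hlen
      rw [blockVal_cons, blockVal_cons, hlen] at h
      have hl := blockVal_lt l
      have hl' := blockVal_lt l'
      rw [hlen] at hl
      have hab : a = b := by cases a <;> cases b <;> simp at h ⊢ <;> omega
      subst hab
      rw [ih hlen (by omega)]

def padVal (b : List Bool) : ℕ := 2 ^ b.length + blockVal b

theorem padVal_lt (b : List Bool) : padVal b < 2 ^ (b.length + 1) := by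
  have := blockVal_lt b
  rw [padVal, pow_succ]
  omega

theorem log_padVal (b : List Bool) : Nat.log 2 (padVal b) = b.length :=
  Nat.log_eq_of_pow_le_of_lt_pow (Nat.le_add_right _ _) (padVal_lt b)

theorem padVal_injective : Function.Injective padVal := by
  intro b b' h
  have hlen : b.length = b'.length := by rw [← log_padVal b, ← log_padVal b', h]
  refine eq_of_blockVal_eq_of_length_eq hlen ?_
  unfold padVal at h
  rw [hlen] at h
  omega

def chunk (n : ℕ) (w : List Bool) (i : ℕ) : List Bool := (w.drop (n * i)).take n

theorem length_chunk_le (n : ℕ) (w : List Bool) (i : ℕ) : (chunk n w i).length ≤ n :=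
  List.length_take_le _ _

theorem chunk_eq_nil {n : ℕ} {w : List Bool} {i : ℕ} (h : w.length ≤ n * i) :
    chunk n w i = [] := by
  simp [chunk, List.drop_eq_nil_of_le h]

theorem getElem?_chunk {n : ℕ} (w : List Bool) (i : ℕ) {r : ℕ} (hr : r < n) :
    (chunk n w i)[r]? = w[n * i + r]? := by
  simp [chunk, List.getElem?_take_of_lt hr]

theorem eq_of_forall_chunk_eq {n : ℕ} (hn : 0 < n) {w w' : List Bool}
    (h : ∀ i, chunk n w i = chunk n w' i) : w = w' := by
  apply List.ext_getElem?
  intro j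
  rw [← Nat.div_add_mod j n, ← getElem?_chunk w _ (Nat.mod_lt j hn),
    ← getElem?_chunk w' _ (Nat.mod_lt j hn), h]

theorem le_mul_add_sub_one_div {n : ℕ} (hn : 0 < n) (L : ℕ) : L ≤ n * ((L + n - 1) / n) := by
  have := Nat.lt_div_mul_add (a := L + n - 1) hn
  rw [mul_comm]
  omega

section Horner

variable {R : Type*} [Semiring R]

/-- `Poly(x; c₀, …, c_{ℓ-1}) = c₀ x^{ℓ-1} + ⋯ + c_{ℓ-1}`. -/
noncomputable def hornerPoly (c : ℕ → R) (ℓ : ℕ) : R[X] :=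
  ∑ i ∈ range ℓ, C (c i) * X ^ (ℓ - 1 - i)

theorem coeff_hornerPoly (c : ℕ → R) (ℓ j : ℕ) :
    (hornerPoly c ℓ).coeff j = if j < ℓ then c (ℓ - 1 - j) else 0 := by
  simp only [hornerPoly, finsetSum_coeff, coeff_C_mul, coeff_X_pow, mul_ite, mul_one, mul_zero]
  split_ifs with hj
  · rw [Finset.sum_eq_single (ℓ - 1 - j)] <;> grind
  · exact Finset.sum_eq_zero fun i hi => if_neg (by grind)

theorem eval_hornerPoly (c : ℕ → R) (ℓ : ℕ) (x : R) :
    (hornerPoly c ℓ).eval x = ∑ i ∈ range ℓ, c i * x ^ (ℓ - 1 - i) := by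
  simp [hornerPoly, eval_finsetSum]

theorem natDegree_hornerPoly_le (c : ℕ → R) (ℓ : ℕ) :
    (hornerPoly c ℓ).natDegree ≤ ℓ - 1 := by
  rw [natDegree_le_iff_coeff_eq_zero]
  intro j hj
  rw [coeff_hornerPoly, if_neg (by omega)]

theorem le_of_hornerPoly_eq {c c' : ℕ → R} {ℓ ℓ' : ℕ} (hc : c 0 ≠ 0)
    (h : hornerPoly c ℓ = hornerPoly c' ℓ') : ℓ ≤ ℓ' := by
  by_contra hlt
  have := congrArg (coeff · (ℓ - 1)) h
  simp only [coeff_hornerPoly] at this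
  rw [if_pos (by omega), if_neg (by omega), Nat.sub_self] at this
  exact hc this

theorem hornerPoly_inj {c c' : ℕ → R} {ℓ ℓ' : ℕ} (hc : c 0 ≠ 0) (hc' : c' 0 ≠ 0)
    (h : hornerPoly c ℓ = hornerPoly c' ℓ') : ℓ = ℓ' ∧ ∀ i < ℓ, c i = c' i := by
  obtain rfl := (le_of_hornerPoly_eq hc h).antisymm (le_of_hornerPoly_eq hc' h.symm)
  refine ⟨rfl, fun i hi => ?_⟩
  have := congrArg (coeff · (ℓ - 1 - i)) h
  simp only [coeff_hornerPoly, if_pos (show ℓ - 1 - i < ℓ by omega)] at this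
  rwa [Nat.sub_sub_self (by omega)] at this

end Horner

theorem padVal_chunk_lt (n : ℕ) (w : List Bool) (i : ℕ) : padVal (chunk n w i) < 2 ^ (n + 1) :=
  (padVal_lt _).trans_le (Nat.pow_le_pow_right two_pos (by simpa using length_chunk_le n w i))

theorem pad1Block_eq_natCast_padVal (p n : ℕ) (w : List Bool) (i : ℕ) :
    pad1Block p n w i = (padVal (chunk n w i) : ZMod p) := rfl

theorem pad1Block_ne_zero {p n : ℕ} (hp : 2 ^ (n + 1) ≤ p) (w : List Bool) (i : ℕ) :
    pad1Block p n w i ≠ 0 := by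
  rw [pad1Block_eq_natCast_padVal, Ne, ZMod.natCast_eq_zero_iff]
  exact Nat.not_dvd_of_pos_of_lt (by simp [padVal]) ((padVal_chunk_lt n w i).trans_le hp)

theorem chunk_eq_of_pad1Block_eq {p n : ℕ} (hp : 2 ^ (n + 1) ≤ p) {w w' : List Bool} {i : ℕ}
    (h : pad1Block p n w i = pad1Block p n w' i) : chunk n w i = chunk n w' i := by
  rw [pad1Block_eq_natCast_padVal, pad1Block_eq_natCast_padVal, ZMod.natCast_eq_natCast_iff',
    Nat.mod_eq_of_lt ((padVal_chunk_lt n w i).trans_le hp),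
    Nat.mod_eq_of_lt ((padVal_chunk_lt n w' i).trans_le hp)] at h
  exact padVal_injective h

noncomputable def hashPoly (p n : ℕ) (w : List Bool) : (ZMod p)[X] :=
  X * hornerPoly (pad1Block p n w) ((w.length + n - 1) / n)

theorem polyHash_eq_val_eval_hashPoly (p μ n : ℕ) (τ : ZMod p) (w : List Bool) :
    polyHash p μ n τ w = (((hashPoly p n w).eval τ).val : ZMod (2 ^ μ)) := by
  simp [polyHash, hashPoly, eval_hornerPoly]

theorem coeff_hashPoly_zero (p n : ℕ) (w : List Bool) : (hashPoly p n w).coeff 0 = 0 := by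
  simp [hashPoly]

theorem natDegree_hashPoly_le (p n : ℕ) (w : List Bool) :
    (hashPoly p n w).natDegree ≤ (w.length + n - 1) / n := by
  rw [natDegree_le_iff_coeff_eq_zero]
  rintro (_ | j) hj
  · exact coeff_hashPoly_zero p n w
  · rw [hashPoly, coeff_X_mul, coeff_hornerPoly, if_neg (by omega)]

theorem hashPoly_injective {p n : ℕ} (hn : 0 < n) (hp : 2 ^ (n + 1) ≤ p) :
    Function.Injective (hashPoly p n) := by
  intro w w' h
  obtain ⟨hℓ, hblocks⟩ := hornerPoly_inj (pad1Block_ne_zero hp w 0)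
    (pad1Block_ne_zero hp w' 0) (isRegular_X.left h)
  refine eq_of_forall_chunk_eq hn fun i => ?_
  by_cases hi : i < (w.length + n - 1) / n
  · exact chunk_eq_of_pad1Block_eq hp (hblocks i hi)
  · have hw := le_mul_add_sub_one_div hn w.length
    have hw' := le_mul_add_sub_one_div hn w'.length
    rw [chunk_eq_nil (hw.trans (Nat.mul_le_mul_left n (by omega))),
      chunk_eq_nil (hw'.trans (Nat.mul_le_mul_left n (by omega)))]

theorem card_filter_range_eval_eq_zero_le {p : ℕ} [Fact p.Prime] {P : (ZMod p)[X]} (hP : P ≠ 0)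
    {N : ℕ} (hN : N ≤ p) :
    #{t ∈ range N | P.eval ((t : ℕ) : ZMod p) = 0} ≤ P.natDegree := by
  have hinj : Set.InjOn (Nat.cast : ℕ → ZMod p) (range N) := fun a ha b hb h => by
    simp only [coe_range, Set.mem_Iio] at ha hb
    rwa [ZMod.natCast_eq_natCast_iff', Nat.mod_eq_of_lt (by omega),
      Nat.mod_eq_of_lt (by omega)] at h
  rw [← card_image_of_injOn (hinj.mono (filter_subset _ _))]
  refine card_le_degree_of_subset_roots fun x hx => ?_
  obtain ⟨t, ht, rfl⟩ := mem_image.mp (mem_def.mpr hx)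
  exact (mem_roots hP).mpr (mem_filter.mp ht).2

theorem card_filter_Ico_intCast_eq_le (a : ℤ) (q K : ℕ) (α : ZMod q) :
    #{d ∈ Ico a (a + q * K) | ((d : ℤ) : ZMod q) = α} ≤ K := by
  calc #{d ∈ Ico a (a + q * K) | ((d : ℤ) : ZMod q) = α}
      ≤ #(Ico (0 : ℤ) K) := card_le_card_of_injOn (fun d => (d - a) / q) ?_ ?_
    _ = K := by simp
  · intro d hd
    simp only [coe_filter, mem_Ico, Set.mem_ofPred_eq, coe_Ico, Set.mem_Ico] at hd ⊢
    have hq : (0 : ℤ) < q := by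
      by_contra! h
      nlinarith [Int.natCast_nonneg q, Int.natCast_nonneg K]
    exact ⟨Int.ediv_nonneg (by omega) hq.le, Int.ediv_lt_of_lt_mul hq (by linarith)⟩
  · intro d hd d' hd' (h : (d - a) / q = (d' - a) / q)
    have hmod : (d - a) % q = (d' - a) % q := Int.ModEq.sub_right a <|
      (ZMod.intCast_eq_intCast_iff' d d' q).mp <|
        (mem_filter.mp hd).2.trans (mem_filter.mp hd').2.symm
    have hd_eq := Int.emod_add_mul_ediv (d - a) q
    have hd'_eq := Int.emod_add_mul_ediv (d' - a) q
    rw [h, hmod] at hd_eq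
    linarith

theorem card_filter_val_sub_val_eq_le {p q K N : ℕ} [Fact p.Prime] {F G : (ZMod p)[X]}
    (hFG : F ≠ G) (hcoeff : F.coeff 0 = G.coeff 0) (hN : N ≤ p) (hpK : 2 * p ≤ q * K + 1)
    (α : ZMod q) :
    #{t ∈ range N | ((F.eval ((t : ℕ) : ZMod p)).val : ZMod q) - (G.eval (t : ZMod p)).val = α}
      ≤ K * (F - G).natDegree := by
  set D := {d ∈ Ico (1 - p : ℤ) (1 - p + q * K) | ((d : ℤ) : ZMod q) = α}
  set roots := fun d : ℤ =>
    {t ∈ range N | (F - G - C (d : ZMod p)).eval ((t : ℕ) : ZMod p) = 0}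
  have hroots (d : ℤ) : #(roots d) ≤ (F - G).natDegree := by
    rw [← natDegree_sub_C (a := (d : ZMod p))]
    refine card_filter_range_eval_eq_zero_le (fun h => hFG ?_) hN
    have hC : F - G = C (d : ZMod p) := sub_eq_zero.mp h
    have hd : (d : ZMod p) = 0 := by simpa [hcoeff] using (congrArg (coeff · 0) hC).symm
    rwa [hd, C_0, sub_eq_zero] at hC
  calc _ ≤ #(D.biUnion roots) := card_le_card fun t ht => ?_
    _ ≤ ∑ d ∈ D, #(roots d) := card_biUnion_le
    _ ≤ #D • (F - G).natDegree := sum_le_card_nsmul _ _ _ fun d _ => hroots d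
    _ ≤ K * (F - G).natDegree := Nat.mul_le_mul_right _ (card_filter_Ico_intCast_eq_le _ _ _ α)
  -- the difference of the two hash values, read in `ℤ`, is one of the residues in `D`
  obtain ⟨ht, hα⟩ := mem_filter.mp ht
  set a := (F.eval (t : ZMod p)).val
  set b := (G.eval (t : ZMod p)).val
  have ha : a < p := ZMod.val_lt _
  have hb : b < p := ZMod.val_lt _
  refine mem_biUnion.mpr ⟨(a - b : ℤ), ?_, mem_filter.mpr ⟨ht, ?_⟩⟩
  · exact mem_filter.mpr ⟨mem_Ico.mpr ⟨by omega, by omega⟩, by push_cast; exact hα⟩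
  · simp [a, b, ZMod.natCast_val]

theorem polyHash_axu_bound_general (m δ μ k p n : ℕ) (hp : p.Prime)
    (hpm : p = 2 ^ m - δ) (hμm : μ < m) (hδ : δ < 2 ^ μ - 1)
    (hkp : 2 ^ k ≤ p) (hn : 0 < n) (hnm : n + 2 ≤ m)
    (X X' : List Bool) (hXX' : X ≠ X') (hLL : X'.length ≤ X.length)
    (α : ZMod (2 ^ μ)) :
    (((Finset.range (2 ^ k)).filter fun t : ℕ =>
        polyHash p μ n (t : ZMod p) X - polyHash p μ n (t : ZMod p) X' = α).card : ℝ)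
        / (2 ^ k : ℝ)
      ≤ (((X.length + n - 1) / n : ℕ) : ℝ) * (2 : ℝ) ^ ((m : ℤ) - k - μ + 1) := by
  have := Fact.mk hp
  have hp_gt : 2 ^ (m - 1) < p := by
    have hμ : 2 ^ μ ≤ 2 ^ (m - 1) := Nat.pow_le_pow_right two_pos (by omega)
    have hm : 2 ^ m = 2 * 2 ^ (m - 1) := by rw [← pow_succ']; congr 1; omega
    omega
  have hblock : 2 ^ (n + 1) ≤ p := (Nat.pow_le_pow_right two_pos (by omega)).trans hp_gt.le
  have hcount := card_filter_val_sub_val_eq_le (K := 2 ^ (m + 1 - μ))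
    ((hashPoly_injective hn hblock).ne hXX')
    (by rw [coeff_hashPoly_zero, coeff_hashPoly_zero]) hkp
    (by rw [← pow_add, Nat.add_sub_cancel' (by omega), pow_succ]; omega) α
  have hdeg : (hashPoly p n X - hashPoly p n X').natDegree ≤ (X.length + n - 1) / n :=
    (natDegree_sub_le _ _).trans <| max_le (natDegree_hashPoly_le p n X) <|
      (natDegree_hashPoly_le p n X').trans (Nat.div_le_div_right (by omega))
  simp only [polyHash_eq_val_eval_hashPoly]
  rw [div_le_iff₀ (by positivity)]
  calc _ ≤ ((2 ^ (m + 1 - μ) * ((X.length + n - 1) / n) : ℕ) : ℝ) := by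
        exact_mod_cast hcount.trans (Nat.mul_le_mul_left _ hdeg)
    _ = ((X.length + n - 1) / n : ℕ) * (2 : ℝ) ^ ((m + 1 - μ : ℕ) : ℤ) := by
        rw [zpow_natCast]; push_cast; ring
    _ = _ := by
        rw [mul_assoc, ← zpow_natCast (2 : ℝ) k, ← zpow_add₀ two_ne_zero]
        congr 2
        omega

/-- AXU bound for `polyHash`: with `p = 2^m − δ` prime, `μ < m`, `δ < 2^μ − 1`, `2^k ≤ p`,
distinct messages `X ≠ X'` with `L ≥ L'`, `ℓ = ⌈L/n⌉`, and `τ` uniform over `k`-bit strings,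
`Pr[polyHash_τ(X) − polyHash_τ(X') = α] ≤ ℓ·2^(m−k−μ+1)`. -/
theorem polyHash_axu_bound (m δ μ k p n : ℕ) [NeZero p] (hp : p.Prime)
    (hpm : p = 2 ^ m - δ) (hμ0 : 0 < μ) (hμm : μ < m) (hδ : δ < 2 ^ μ - 1)
    (hk : 0 < k) (hkp : 2 ^ k ≤ p) (hn : 0 < n) (hnm : n + 2 ≤ m)
    (X X' : List Bool) (hXX' : X ≠ X') (hLL : X'.length ≤ X.length)
    (α : ZMod (2 ^ μ)) :
    (((Finset.range (2 ^ k)).filter fun t : ℕ =>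
        polyHash p μ n (t : ZMod p) X - polyHash p μ n (t : ZMod p) X' = α).card : ℝ)
        / (2 ^ k : ℝ)
      ≤ (((X.length + n - 1) / n : ℕ) : ℝ) * (2 : ℝ) ^ ((m : ℤ) - k - μ + 1) :=
  polyHash_axu_bound_general m δ μ k p n hp hpm hμm hδ hkp hn hnm X X' hXX' hLL α
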